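/- For every M > 0 there exist μ > 0 and C > 0 such that the following holds. Let c₃, γ ∈ ℝ with |c₃| + |γ| ≤ μ, and let U solve the profile ODE with parameters (c₃, γ) and satisfy sup_{y ∈ (−1,1)} |U(y)| ≤ M(|c₃| + |γ|). Then for all y ∈ (−1,1), |U''(y) + 2c₃ y/(1−y²)| ≤ C (|c₃| + |γ|) (1 + |ln(1−y²)|²). -/

import Mathlib

/-!
The substitution `W = U / (1 - y²)` turns the profile ODE into the Riccati equation
`W' = c₃ / (1 - y²) - W² / 2`, `W 0 = γ`. For small `ε = |c₃| + |γ|` the barrier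
`2ε (1 + artanh |y|)`, of slope `2ε / (1 - y²)`, cannot be crossed: on it
`(1 - y²) W² ≤ 16 ε²` since `(1 + artanh y)² (1 - y²) ≤ 4`, hence `|W'| < 2ε / (1 - y²)`.
Differentiating the ODE once more writes `U'' + 2 c₃ y / (1 - y²)` as a cubic in `W`, and
`artanh |y| ≤ 1 + |log (1 - y²)| / 2` turns the barrier into the logarithmic bound.
-/

open Set

/-- `U` solves the profile ODE with parameters `(c₃, γ)`:
`U` is continuous on `[-1,1]`, `C²` on `(-1,1)`, satisfies
`(1-y²)U' + 2yU + U²/2 = c₃(1-y²)` on `(-1,1)`, and `U(0) = γ`. -/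
def SolvesProfileODE (c₃ γ : ℝ) (U : ℝ → ℝ) : Prop :=
  ContinuousOn U (Icc (-1) 1) ∧
  ContDiffOn ℝ 2 U (Ioo (-1) 1) ∧
  (∀ y ∈ Ioo (-1 : ℝ) 1,
    (1 - y ^ 2) * deriv U y + 2 * y * U y + (1 / 2) * (U y) ^ 2 = c₃ * (1 - y ^ 2)) ∧
  U 0 = γ

open Filter Topology Real

namespace Real

theorem hasDerivAt_artanh {x : ℝ} (hx : x ∈ Ioo (-1 : ℝ) 1) :
    HasDerivAt artanh (1 - x ^ 2)⁻¹ x := by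
  have hp : 0 < 1 + x := by linarith [hx.1]
  have hm : 0 < 1 - x := by linarith [hx.2]
  have hlog := ((((hasDerivAt_id x).const_add 1).div ((hasDerivAt_id x).const_sub 1)
    hm.ne').log (div_pos hp hm).ne').const_mul (1 / 2)
  have heq : artanh =ᶠ[𝓝 x] fun y => 1 / 2 * log ((1 + y) / (1 - y)) :=
    eventually_of_mem (isOpen_Ioo.mem_nhds hx) fun y hy =>
      artanh_eq_half_log (Ioo_subset_Icc_self hy)
  have hsq : 1 - x ^ 2 ≠ 0 := by nlinarith
  refine (hlog.congr_of_eventuallyEq heq).congr_deriv ?_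
  simp only [id, Pi.div_apply]
  field_simp
  ring

theorem one_add_artanh_le_sqrt {x : ℝ} (hx : x ∈ Ioo (-1 : ℝ) 1) :
    1 + artanh x ≤ √((1 + x) / (1 - x)) := by
  rw [← exp_artanh hx]
  linarith [add_one_le_exp (artanh x)]

theorem sq_one_add_artanh_mul_le {x : ℝ} (hx : x ∈ Ico (0 : ℝ) 1) :
    (1 + artanh x) ^ 2 * (1 - x ^ 2) ≤ 4 := by
  have hm : 0 < 1 - x := by linarith [hx.2]
  have h0 : 0 ≤ 1 + artanh x := by linarith [artanh_nonneg hx.1]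
  have hsq : (1 + artanh x) ^ 2 ≤ (1 + x) / (1 - x) := by
    calc (1 + artanh x) ^ 2 ≤ √((1 + x) / (1 - x)) ^ 2 :=
          pow_le_pow_left₀ h0 (one_add_artanh_le_sqrt ⟨by linarith [hx.1], hx.2⟩) 2
      _ = (1 + x) / (1 - x) := sq_sqrt (div_nonneg (by linarith [hx.1]) hm.le)
  calc (1 + artanh x) ^ 2 * (1 - x ^ 2) ≤ (1 + x) / (1 - x) * (1 - x ^ 2) := by
        gcongr; nlinarith [hx.2, hx.1]
    _ = (1 + x) ^ 2 := by field_simp; ring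
    _ ≤ 4 := by nlinarith [hx.1, hx.2]

theorem artanh_abs_le {y : ℝ} (hy : |y| < 1) :
    artanh |y| ≤ 1 + |log (1 - y ^ 2)| / 2 := by
  have hp : 0 < 1 + |y| := by positivity
  have hm : 0 < 1 - |y| := by linarith
  have hsplit : log ((1 + |y|) / (1 - |y|)) = 2 * log (1 + |y|) - log (1 - y ^ 2) := by
    rw [← sq_abs y, show 1 - |y| ^ 2 = (1 - |y|) * (1 + |y|) by ring,
      log_div hp.ne' hm.ne', log_mul hm.ne' hp.ne']
    ring
  have hlog2 : log (1 + |y|) ≤ 1 := by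
    linarith [log_le_sub_one_of_pos hp, hy]
  rw [artanh_eq_half_log ⟨by linarith [abs_nonneg y], hy.le⟩, hsplit]
  linarith [neg_le_abs (log (1 - y ^ 2))]

end Real

theorem abs_le_of_riccati_of_pos {W D : ℝ → ℝ} {ε : ℝ} (hε : 0 < ε) (hε8 : ε < 1 / 8)
    (hW : ∀ t ∈ Ico (0 : ℝ) 1, HasDerivAt W (D t) t)
    (hD : ∀ t ∈ Ico (0 : ℝ) 1, |D t| ≤ ε / (1 - t ^ 2) + W t ^ 2 / 2)
    (h0 : |W 0| ≤ ε) {t : ℝ} (ht : t ∈ Ico (0 : ℝ) 1) :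
    |W t| ≤ 2 * ε * (1 + artanh t) := by
  have hsub : Icc 0 t ⊆ Ico 0 1 := Icc_subset_Ico_right ht.2
  have hB : ∀ x ∈ Ico (0 : ℝ) 1,
      HasDerivAt (fun x => 2 * ε * (1 + artanh x)) (2 * ε * (1 - x ^ 2)⁻¹) x := fun x hx =>
    ((hasDerivAt_artanh ⟨by linarith [hx.1], hx.2⟩).const_add 1).const_mul (2 * ε)
  refine image_norm_le_of_norm_deriv_right_lt_deriv_boundary'
    (fun x hx => (hW x (hsub hx)).continuousAt.continuousWithinAt)
    (fun x hx => (hW x (hsub (Ico_subset_Icc_self hx))).hasDerivWithinAt)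
    (by simpa [artanh_zero] using h0.trans (by linarith))
    (fun x hx => (hB x (hsub hx)).continuousAt.continuousWithinAt)
    (fun x hx => (hB x (hsub (Ico_subset_Icc_self hx))).hasDerivWithinAt)
    (fun x hx hWx => ?_) ⟨ht.1, le_rfl⟩
  have hx : x ∈ Ico (0 : ℝ) 1 := hsub (Ico_subset_Icc_self hx)
  have hs : 0 < 1 - x ^ 2 := by nlinarith [hx.1, hx.2]
  rw [Real.norm_eq_abs] at hWx ⊢
  have hWsq : W x ^ 2 * (1 - x ^ 2) ≤ 16 * ε ^ 2 := by
    rw [← sq_abs, hWx]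
    nlinarith [sq_one_add_artanh_mul_le hx]
  calc |D x| ≤ ε / (1 - x ^ 2) + W x ^ 2 / 2 := hD x hx
    _ = (ε + W x ^ 2 * (1 - x ^ 2) / 2) / (1 - x ^ 2) := by field_simp
    _ < 2 * ε * (1 - x ^ 2)⁻¹ := by
      rw [← div_eq_mul_inv]
      gcongr
      nlinarith

theorem abs_le_of_riccati {W D : ℝ → ℝ} {ε : ℝ} (hε : 0 ≤ ε) (hε8 : ε < 1 / 8)
    (hW : ∀ t ∈ Ico (0 : ℝ) 1, HasDerivAt W (D t) t)
    (hD : ∀ t ∈ Ico (0 : ℝ) 1, |D t| ≤ ε / (1 - t ^ 2) + W t ^ 2 / 2)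
    (h0 : |W 0| ≤ ε) {t : ℝ} (ht : t ∈ Ico (0 : ℝ) 1) :
    |W t| ≤ 2 * ε * (1 + artanh t) := by
  have hlim : Tendsto (fun e => 2 * e * (1 + artanh t)) (𝓝[>] ε) (𝓝 (2 * ε * (1 + artanh t))) :=
    (by fun_prop : Continuous fun e : ℝ => 2 * e * (1 + artanh t)).continuousWithinAt.tendsto
  refine ge_of_tendsto hlim ?_
  filter_upwards [Ioo_mem_nhdsGT hε8] with e he
  refine abs_le_of_riccati_of_pos (hε.trans_lt he.1) he.2 hW (fun x hx => (hD x hx).trans ?_)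
    (h0.trans he.1.le) ht
  have hs : 0 ≤ 1 - x ^ 2 := by nlinarith [hx.1, hx.2]
  gcongr
  exact he.1.le

theorem one_sub_sq_pos_of_mem_Ioo {y : ℝ} (hy : y ∈ Ioo (-1 : ℝ) 1) : 0 < 1 - y ^ 2 := by
  nlinarith [hy.1, hy.2]

noncomputable def riccatiVar (U : ℝ → ℝ) (y : ℝ) : ℝ := U y / (1 - y ^ 2)

namespace SolvesProfileODE

variable {c₃ γ : ℝ} {U : ℝ → ℝ}

theorem hasDerivAt (hU : SolvesProfileODE c₃ γ U) {y : ℝ} (hy : y ∈ Ioo (-1 : ℝ) 1) :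
    HasDerivAt U (deriv U y) y :=
  ((hU.2.1.differentiableOn (by norm_num)).differentiableAt
    (isOpen_Ioo.mem_nhds hy)).hasDerivAt

theorem hasDerivAt_riccatiVar (hU : SolvesProfileODE c₃ γ U) {y : ℝ} (hy : y ∈ Ioo (-1 : ℝ) 1) :
    HasDerivAt (riccatiVar U) (c₃ / (1 - y ^ 2) - riccatiVar U y ^ 2 / 2) y := by
  have hs := one_sub_sq_pos_of_mem_Ioo hy
  refine ((hU.hasDerivAt hy).div ((hasDerivAt_pow 2 y).const_sub 1) hs.ne').congr_deriv ?_
  have hode := hU.2.2.1 y hy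
  simp only [riccatiVar]
  field_simp
  linear_combination 2 * hode

theorem deriv_eq (hU : SolvesProfileODE c₃ γ U) {y : ℝ} (hy : y ∈ Ioo (-1 : ℝ) 1) :
    deriv U y = c₃ - 2 * y * riccatiVar U y - (1 - y ^ 2) * riccatiVar U y ^ 2 / 2 := by
  have hs := one_sub_sq_pos_of_mem_Ioo hy
  have hode := hU.2.2.1 y hy
  simp only [riccatiVar]
  field_simp
  linear_combination 2 * hode

theorem deriv_deriv_add (hU : SolvesProfileODE c₃ γ U) {y : ℝ} (hy : y ∈ Ioo (-1 : ℝ) 1) :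
    deriv (deriv U) y + 2 * c₃ * y / (1 - y ^ 2) =
      -(2 + c₃) * riccatiVar U y + 2 * y * riccatiVar U y ^ 2
        + (1 - y ^ 2) * riccatiVar U y ^ 3 / 2 := by
  have hs := one_sub_sq_pos_of_mem_Ioo hy
  have hW := hU.hasDerivAt_riccatiVar hy
  have hF := ((hasDerivAt_const y c₃).sub (((hasDerivAt_id y).const_mul 2).mul hW)).sub
    ((((hasDerivAt_pow 2 y).const_sub 1).mul (hW.pow 2)).div_const 2)
  have heq : deriv U =ᶠ[𝓝 y]
      fun z => c₃ - 2 * z * riccatiVar U z - (1 - z ^ 2) * riccatiVar U z ^ 2 / 2 :=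
    eventually_of_mem (isOpen_Ioo.mem_nhds hy) fun z hz => hU.deriv_eq hz
  rw [heq.deriv_eq.trans hF.deriv]
  simp only [id, Pi.pow_apply]
  field_simp
  ring

theorem abs_riccatiVar_le (hU : SolvesProfileODE c₃ γ U) {ε : ℝ} (hε : |c₃| + |γ| ≤ ε)
    (hε8 : ε < 1 / 8) {y : ℝ} (hy : y ∈ Ioo (-1 : ℝ) 1) :
    |riccatiVar U y| ≤ 2 * ε * (1 + artanh |y|) := by
  have hε0 : 0 ≤ ε := (by positivity : 0 ≤ |c₃| + |γ|).trans hε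
  have hD : ∀ t ∈ Ioo (-1 : ℝ) 1, |c₃ / (1 - t ^ 2) - riccatiVar U t ^ 2 / 2|
      ≤ ε / (1 - t ^ 2) + riccatiVar U t ^ 2 / 2 := by
    intro t ht
    have hs := one_sub_sq_pos_of_mem_Ioo ht
    calc _ ≤ |c₃ / (1 - t ^ 2)| + |riccatiVar U t ^ 2 / 2| := abs_sub _ _
      _ = |c₃| / (1 - t ^ 2) + riccatiVar U t ^ 2 / 2 := by
        rw [abs_div, abs_of_pos hs, abs_of_nonneg (by positivity : 0 ≤ riccatiVar U t ^ 2 / 2)]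
      _ ≤ _ := by gcongr; linarith [abs_nonneg γ]
  have h0 : |riccatiVar U 0| ≤ ε := by
    simp only [riccatiVar, hU.2.2.2]
    norm_num
    linarith [abs_nonneg c₃]
  have hmem : ∀ t ∈ Ico (0 : ℝ) 1, t ∈ Ioo (-1 : ℝ) 1 ∧ -t ∈ Ioo (-1 : ℝ) 1 := fun t ht =>
    ⟨⟨by linarith [ht.1], ht.2⟩, ⟨by linarith [ht.2], by linarith [ht.1]⟩⟩
  rcases le_or_gt 0 y with hy0 | hy0
  · rw [abs_of_nonneg hy0]
    exact abs_le_of_riccati hε0 hε8 (fun t ht => hU.hasDerivAt_riccatiVar (hmem t ht).1)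
      (fun t ht => hD t (hmem t ht).1) h0 ⟨hy0, hy.2⟩
  · rw [abs_of_neg hy0]
    have hrefl := abs_le_of_riccati (W := fun t => riccatiVar U (-t))
      (D := fun t => -(c₃ / (1 - (-t) ^ 2) - riccatiVar U (-t) ^ 2 / 2)) hε0 hε8
      (fun t ht =>
        ((hU.hasDerivAt_riccatiVar (hmem t ht).2).comp t (hasDerivAt_neg t)).congr_deriv (by ring))
      (fun t ht => by simpa only [abs_neg, neg_sq] using hD (-t) (hmem t ht).2)
      (by simpa using h0) (t := -y) ⟨by linarith, by linarith [hy.1]⟩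
    rwa [neg_neg] at hrefl

end SolvesProfileODE

theorem abs_riccati_cubic_le {c y w ε a : ℝ} (hε : ε ≤ 1 / 8) (hc : |c| ≤ ε) (hy : |y| ≤ 1)
    (ha : 1 ≤ a) (hw : |w| ≤ 2 * ε * a) (has : a ^ 2 * (1 - y ^ 2) ≤ 4) :
    |-(2 + c) * w + 2 * y * w ^ 2 + (1 - y ^ 2) * w ^ 3 / 2| ≤ 6 * ε * a ^ 2 := by
  have hε0 : 0 ≤ ε := (abs_nonneg c).trans hc
  have hs : 0 ≤ 1 - y ^ 2 := by nlinarith [abs_nonneg y, sq_abs y]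
  have hwa : |w| ≤ 2 * ε * a ^ 2 :=
    hw.trans (mul_le_mul_of_nonneg_left (by nlinarith) (by positivity))
  have hw2 : w ^ 2 ≤ 4 * ε ^ 2 * a ^ 2 := by
    rw [← sq_abs]; nlinarith [abs_nonneg w]
  have h1 : |-(2 + c) * w| ≤ 17 / 4 * ε * a ^ 2 := by
    rw [abs_mul, abs_neg]
    have : |2 + c| ≤ 17 / 8 := (abs_add_le 2 c).trans (by norm_num; linarith)
    nlinarith [abs_nonneg w, abs_nonneg (2 + c)]
  have h2 : |2 * y * w ^ 2| ≤ ε * a ^ 2 := by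
    rw [abs_mul, abs_mul, abs_two, abs_of_nonneg (sq_nonneg w)]
    nlinarith [mul_le_mul_of_nonneg_right hy (sq_nonneg w),
      mul_nonneg (mul_nonneg hε0 (by linarith : 0 ≤ 1 - 8 * ε)) (sq_nonneg a)]
  have h3 : |(1 - y ^ 2) * w ^ 3 / 2| ≤ ε * a ^ 2 / 4 := by
    have hsw : (1 - y ^ 2) * w ^ 2 ≤ 16 * ε ^ 2 := by nlinarith
    rw [show (1 - y ^ 2) * w ^ 3 / 2 = (1 - y ^ 2) * w ^ 2 * w / 2 by ring, abs_div, abs_mul,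
      abs_of_nonneg (mul_nonneg hs (sq_nonneg w)), abs_two]
    nlinarith [mul_le_mul hsw hwa (abs_nonneg w) (by positivity),
      mul_nonneg (mul_nonneg hε0 (by nlinarith : 0 ≤ 1 - 64 * ε ^ 2)) (sq_nonneg a)]
  calc _ ≤ |-(2 + c) * w| + |2 * y * w ^ 2| + |(1 - y ^ 2) * w ^ 3 / 2| := abs_add_three _ _ _
    _ ≤ 6 * ε * a ^ 2 := by nlinarith [sq_nonneg a]

theorem stmt7_general (M : ℝ) :
    ∃ μ > 0, ∃ C > 0, ∀ c₃ γ : ℝ, |c₃| + |γ| ≤ μ →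
      ∀ U : ℝ → ℝ, SolvesProfileODE c₃ γ U →
        (∀ y ∈ Ioo (-1 : ℝ) 1, |U y| ≤ M * (|c₃| + |γ|)) →
        ∀ y ∈ Ioo (-1 : ℝ) 1,
          |deriv (deriv U) y + 2 * c₃ * y / (1 - y ^ 2)|
            ≤ C * (|c₃| + |γ|) * (1 + |Real.log (1 - y ^ 2)| ^ 2) := by
  refine ⟨1 / 10, by norm_num, 48, by norm_num, fun c₃ γ hμ U hU _ y hy => ?_⟩
  set ε := |c₃| + |γ|
  set L := |Real.log (1 - y ^ 2)|
  have hya : |y| < 1 := abs_lt.2 hy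
  have ha : 1 ≤ 1 + artanh |y| := by linarith [artanh_nonneg (abs_nonneg y)]
  have has : (1 + artanh |y|) ^ 2 * (1 - y ^ 2) ≤ 4 := by
    simpa only [sq_abs] using sq_one_add_artanh_mul_le ⟨abs_nonneg y, hya⟩
  rw [hU.deriv_deriv_add hy]
  calc _ ≤ 6 * ε * (1 + artanh |y|) ^ 2 :=
        abs_riccati_cubic_le (by linarith) (le_add_of_nonneg_right (abs_nonneg γ)) hya.le ha
          (hU.abs_riccatiVar_le le_rfl (by linarith) hy) has
    _ ≤ 6 * ε * (2 + L / 2) ^ 2 := by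
        have hb : 1 + artanh |y| ≤ 2 + L / 2 := by linarith [artanh_abs_le hya]
        exact mul_le_mul_of_nonneg_left (pow_le_pow_left₀ (by linarith) hb 2) (by positivity)
    _ ≤ 48 * ε * (1 + L ^ 2) := by
        have hε : 0 ≤ ε := by positivity
        nlinarith [mul_nonneg hε (sq_nonneg (L - 1)), mul_nonneg hε (sq_nonneg L)]

/-- Asymptotics of `U''` (Lemma 2.1, estimate (2.4)). -/
theorem stmt7 (M : ℝ) (hM : 0 < M) :
    ∃ μ > 0, ∃ C > 0, ∀ c₃ γ : ℝ, |c₃| + |γ| ≤ μ →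
      ∀ U : ℝ → ℝ, SolvesProfileODE c₃ γ U →
        (∀ y ∈ Ioo (-1 : ℝ) 1, |U y| ≤ M * (|c₃| + |γ|)) →
        ∀ y ∈ Ioo (-1 : ℝ) 1,
          |deriv (deriv U) y + 2 * c₃ * y / (1 - y ^ 2)|
            ≤ C * (|c₃| + |γ|) * (1 + |Real.log (1 - y ^ 2)| ^ 2) :=
  stmt7_general M
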